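/- arXiv:1905.02502 — 15 statements merged into one kernel-verified Lean document; each statement's English description precedes it below -/
import Mathlib

section
/- Let w ∈ V⊗V⊗V be a superpotential (i.e. φ(w) = w) and let θ be a linear automorphism of V belonging to Aut(w), say (θ⊗θ⊗θ)(w) = λ·w for some nonzero λ ∈ k. Then the MS twist w^θ = (θ²⊗θ⊗id)(w) is a twisted superpotential; more precisely, the linear automorphism θ' := λ⁻¹·θ³ of V satisfies (θ'⊗id⊗id)(φ(w^θ)) = w^θ. -/
open TensorProduct

/-
Since `φ` permutes the tensor factors cyclically, `φ ∘ (f ⊗ g ⊗ h) = (h ⊗ f ⊗ g) ∘ φ`. Hence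
`φ(w^θ) = (id ⊗ θ² ⊗ θ)(φ w) = (id ⊗ θ² ⊗ θ)(w)`, and applying `θ³` to the first factor gives
`(θ³ ⊗ θ² ⊗ θ)(w) = (θ² ⊗ θ ⊗ id)((θ ⊗ θ ⊗ θ)(w)) = λ • w^θ`.
-/

theorem TensorProduct.cyclic_map_map {R M : Type*} [CommSemiring R] [AddCommMonoid M]
    [Module R M] {φ : M ⊗[R] (M ⊗[R] M) →ₗ[R] M ⊗[R] (M ⊗[R] M)}
    (hφ : ∀ a b c : M, φ (a ⊗ₜ (b ⊗ₜ c)) = c ⊗ₜ (a ⊗ₜ b)) (f g h : M →ₗ[R] M)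
    (u : M ⊗[R] (M ⊗[R] M)) :
    φ (map f (map g h) u) = map h (map f g) (φ u) := by
  have hcomp : φ ∘ₗ map f (map g h) = map h (map f g) ∘ₗ φ :=
    ext_threefold' fun a b c => by simp [hφ]
  exact LinearMap.congr_fun hcomp u

theorem stmt_0_general (k : Type*) [Field k]
    (V : Type*) [AddCommGroup V] [Module k V]
    (φ : (V ⊗[k] (V ⊗[k] V)) →ₗ[k] (V ⊗[k] (V ⊗[k] V)))
    (hφ : ∀ a b c : V, φ (a ⊗ₜ[k] (b ⊗ₜ[k] c)) = c ⊗ₜ[k] (a ⊗ₜ[k] b))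
    (w : V ⊗[k] (V ⊗[k] V)) (hw : φ w = w)
    (θ : V ≃ₗ[k] V) (lam : k) (hlam : lam ≠ 0)
    (hθ : TensorProduct.map θ.toLinearMap
      (TensorProduct.map θ.toLinearMap θ.toLinearMap) w = lam • w) :
    let wθ := TensorProduct.map (θ.toLinearMap ∘ₗ θ.toLinearMap)
      (TensorProduct.map θ.toLinearMap (LinearMap.id : V →ₗ[k] V)) w
    let θ' : V →ₗ[k] V := lam⁻¹ • (θ.toLinearMap ∘ₗ θ.toLinearMap ∘ₗ θ.toLinearMap)
    TensorProduct.map θ'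
      (TensorProduct.map (LinearMap.id : V →ₗ[k] V) (LinearMap.id : V →ₗ[k] V))
      (φ wθ) = wθ := by
  set t := θ.toLinearMap
  intro wθ θ'
  have hφwθ : φ wθ = map LinearMap.id (map (t ∘ₗ t) t) w := by
    rw [TensorProduct.cyclic_map_map hφ, hw]
  calc map θ' (map LinearMap.id LinearMap.id) (φ wθ)
      = lam⁻¹ • map (t ∘ₗ t) (map t LinearMap.id) (map t (map t t) w) := by
        simp only [hφwθ, θ', map_map, ← map_comp, map_smul_left, LinearMap.smul_apply,
          LinearMap.comp_id, LinearMap.id_comp, LinearMap.comp_assoc]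
    _ = wθ := by rw [hθ, map_smul, smul_smul, inv_mul_cancel₀ hlam, one_smul]

/-- If `w` is a superpotential and `θ ∈ Aut(w)` with `(θ⊗θ⊗θ)(w) = λ•w`, `λ ≠ 0`, then the
MS twist `w^θ = (θ²⊗θ⊗id)(w)` is a twisted superpotential; precisely,
`θ' := λ⁻¹•θ³` satisfies `(θ'⊗id⊗id)(φ(w^θ)) = w^θ`. -/
theorem stmt_0 (k : Type*) [Field k] [IsAlgClosed k] [CharZero k]
    (V : Type*) [AddCommGroup V] [Module k V] (B : Module.Basis (Fin 3) k V)
    (φ : (V ⊗[k] (V ⊗[k] V)) →ₗ[k] (V ⊗[k] (V ⊗[k] V)))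
    (hφ : ∀ a b c : V, φ (a ⊗ₜ[k] (b ⊗ₜ[k] c)) = c ⊗ₜ[k] (a ⊗ₜ[k] b))
    (w : V ⊗[k] (V ⊗[k] V)) (hw : φ w = w)
    (θ : V ≃ₗ[k] V) (lam : k) (hlam : lam ≠ 0)
    (hθ : TensorProduct.map θ.toLinearMap
      (TensorProduct.map θ.toLinearMap θ.toLinearMap) w = lam • w) :
    let wθ := TensorProduct.map (θ.toLinearMap ∘ₗ θ.toLinearMap)
      (TensorProduct.map θ.toLinearMap (LinearMap.id : V →ₗ[k] V)) w
    let θ' : V →ₗ[k] V := lam⁻¹ • (θ.toLinearMap ∘ₗ θ.toLinearMap ∘ₗ θ.toLinearMap)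
    TensorProduct.map θ'
      (TensorProduct.map (LinearMap.id : V →ₗ[k] V) (LinearMap.id : V →ₗ[k] V))
      (φ wθ) = wθ :=
  stmt_0_general k V φ hφ w hw θ lam hlam hθ
end

section
/- (Type P₁) For α, β, γ ∈ k with αβγ ≠ 0, the potential w = α²β·xyz + β²γ·yzx + γ²α·zxy − α²γ·xzy − γ²β·zyx − β²α·yxz ∈ V⊗V⊗V is a twisted superpotential; that is, there exists a linear automorphism θ of V such that (θ⊗id⊗id)(φ(w)) = w. -/
/-!
Take `θ` diagonal in the basis `x, y, z` with eigenvalues `α² / (β γ)`, `β² / (γ α)`, `γ² / (α β)`.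
Since `φ` moves the last letter of a monomial to the front and `θ` then rescales that letter,
`(θ ⊗ id ⊗ id) ∘ φ` sends each of the six monomials of `w` to a multiple of the next one in its
cyclic orbit (`xyz ↦ zxy ↦ yzx ↦ xyz` and `xzy ↦ yxz ↦ zyx ↦ xzy`), and these eigenvalues are
exactly the ratios of consecutive coefficients of `w`.
-/

open TensorProduct

namespace Module.Basis

variable {ι R M : Type*} [CommRing R] [AddCommGroup M] [Module R M]

noncomputable def diagonalEquiv (B : Basis ι R M) (u : ι → Rˣ) : M ≃ₗ[R] M :=
  B.equiv (B.unitsSMul u) (Equiv.refl ι)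

theorem diagonalEquiv_apply_self (B : Basis ι R M) (u : ι → Rˣ) (i : ι) :
    B.diagonalEquiv u (B i) = (u i : R) • B i := by
  rw [diagonalEquiv, equiv_apply, Equiv.refl_apply, unitsSMul_apply, Units.smul_def]

end Module.Basis

theorem TensorProduct.map_cyclic_tmul_of_apply_eq_smul {R V : Type*} [CommRing R]
    [AddCommGroup V] [Module R V] {φ : V ⊗[R] (V ⊗[R] V) →ₗ[R] V ⊗[R] (V ⊗[R] V)}
    (hφ : ∀ a b c : V, φ (a ⊗ₜ[R] (b ⊗ₜ[R] c)) = c ⊗ₜ[R] (a ⊗ₜ[R] b))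
    (θ : V →ₗ[R] V) {c : V} {r : R} (hc : θ c = r • c) (a b : V) :
    map θ (map LinearMap.id LinearMap.id) (φ (a ⊗ₜ[R] (b ⊗ₜ[R] c)))
      = r • c ⊗ₜ[R] (a ⊗ₜ[R] b) := by
  rw [hφ, map_tmul, hc, map_tmul, LinearMap.id_apply, LinearMap.id_apply, smul_tmul']

theorem stmt_4_general (k : Type*) [Field k]
    (V : Type*) [AddCommGroup V] [Module k V] (B : Module.Basis (Fin 3) k V)
    (φ : (V ⊗[k] (V ⊗[k] V)) →ₗ[k] (V ⊗[k] (V ⊗[k] V)))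
    (hφ : ∀ a b c : V, φ (a ⊗ₜ[k] (b ⊗ₜ[k] c)) = c ⊗ₜ[k] (a ⊗ₜ[k] b))
    (α β γ : k) (h : α * β * γ ≠ 0) :
    let x := B 0; let y := B 1; let z := B 2
    let t : V → V → V → V ⊗[k] (V ⊗[k] V) := fun u v w => u ⊗ₜ[k] (v ⊗ₜ[k] w)
    let w := (α^2*β) • t x y z + (β^2*γ) • t y z x + (γ^2*α) • t z x y
      - (α^2*γ) • t x z y - (γ^2*β) • t z y x - (β^2*α) • t y x z
    ∃ θ : V ≃ₗ[k] V,
      TensorProduct.map θ.toLinearMap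
        (TensorProduct.map (LinearMap.id : V →ₗ[k] V) (LinearMap.id : V →ₗ[k] V))
        (φ w) = w := by
  intro x y z t w
  have hα : α ≠ 0 := left_ne_zero_of_mul (left_ne_zero_of_mul h)
  have hβ : β ≠ 0 := right_ne_zero_of_mul (left_ne_zero_of_mul h)
  have hγ : γ ≠ 0 := right_ne_zero_of_mul h
  let u : Fin 3 → kˣ := ![Units.mk0 (α^2 / (β*γ)) (by positivity),
    Units.mk0 (β^2 / (γ*α)) (by positivity), Units.mk0 (γ^2 / (α*β)) (by positivity)]
  let θ := B.diagonalEquiv u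
  refine ⟨θ, ?_⟩
  have cycle_x := map_cyclic_tmul_of_apply_eq_smul hφ θ.toLinearMap (B.diagonalEquiv_apply_self u 0)
  have cycle_y := map_cyclic_tmul_of_apply_eq_smul hφ θ.toLinearMap (B.diagonalEquiv_apply_self u 1)
  have cycle_z := map_cyclic_tmul_of_apply_eq_smul hφ θ.toLinearMap (B.diagonalEquiv_apply_self u 2)
  simp only [w, t, x, y, z, map_add, map_sub, map_smul, cycle_x, cycle_y, cycle_z, smul_smul]
  match_scalars <;> simp only [u, Matrix.cons_val, Units.val_mk0] <;> field_simp

theorem stmt_4 (k : Type*) [Field k] [IsAlgClosed k] [CharZero k]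
    (V : Type*) [AddCommGroup V] [Module k V] (B : Module.Basis (Fin 3) k V)
    (φ : (V ⊗[k] (V ⊗[k] V)) →ₗ[k] (V ⊗[k] (V ⊗[k] V)))
    (hφ : ∀ a b c : V, φ (a ⊗ₜ[k] (b ⊗ₜ[k] c)) = c ⊗ₜ[k] (a ⊗ₜ[k] b))
    (α β γ : k) (h : α * β * γ ≠ 0) :
    let x := B 0; let y := B 1; let z := B 2
    let t : V → V → V → V ⊗[k] (V ⊗[k] V) := fun u v w => u ⊗ₜ[k] (v ⊗ₜ[k] w)
    let w := (α^2*β) • t x y z + (β^2*γ) • t y z x + (γ^2*α) • t z x y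
      - (α^2*γ) • t x z y - (γ^2*β) • t z y x - (β^2*α) • t y x z
    ∃ θ : V ≃ₗ[k] V,
      TensorProduct.map θ.toLinearMap
        (TensorProduct.map (LinearMap.id : V →ₗ[k] V) (LinearMap.id : V →ₗ[k] V))
        (φ w) = w :=
  stmt_4_general k V B φ hφ α β γ h
end

section
/- (Type P₂) For α ∈ k with α ≠ 0, the potential w = xyz + α·yzx + α²·zxy − α·xzy − α²·zyx − yxz + yyz − 2α·yzy + α²·zyy ∈ V⊗V⊗V is a twisted superpotential; that is, there exists a linear automorphism θ of V such that (θ⊗id⊗id)(φ(w)) = w. -/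
/-
The cyclic shift `φ` followed by `θ ⊗ id ⊗ id` sends a monomial `abc` to `θ(c) a b`, so the
claim is a coefficient identity between two potentials once `θ` is guessed. It holds for `θ`
acting as `α²` on `z` and as `α⁻¹` times the shear `x ↦ x + 3y`, `y ↦ y` on `⟨x, y⟩`; this `θ`
has determinant `1`, hence is an automorphism.
-/

open TensorProduct

section

variable {k V : Type*} [Field k] [AddCommGroup V] [Module k V]

def potentialP₂ (α : k) (x y z : V) : V ⊗[k] (V ⊗[k] V) :=
  x ⊗ₜ (y ⊗ₜ z) + α • y ⊗ₜ (z ⊗ₜ x) + α ^ 2 • z ⊗ₜ (x ⊗ₜ y) - α • x ⊗ₜ (z ⊗ₜ y)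
    - α ^ 2 • z ⊗ₜ (y ⊗ₜ x) - y ⊗ₜ (x ⊗ₜ z) + y ⊗ₜ (y ⊗ₜ z) - (2 * α) • y ⊗ₜ (z ⊗ₜ y)
    + α ^ 2 • z ⊗ₜ (y ⊗ₜ y)

theorem map_map_id_cyclic_tmul (θ : V →ₗ[k] V)
    {φ : (V ⊗[k] (V ⊗[k] V)) →ₗ[k] (V ⊗[k] (V ⊗[k] V))}
    (hφ : ∀ a b c : V, φ (a ⊗ₜ[k] (b ⊗ₜ[k] c)) = c ⊗ₜ[k] (a ⊗ₜ[k] b)) (a b c : V) :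
    map θ (map LinearMap.id LinearMap.id) (φ (a ⊗ₜ (b ⊗ₜ c))) = θ c ⊗ₜ (a ⊗ₜ b) := by
  rw [hφ, map_tmul, map_tmul, LinearMap.id_apply, LinearMap.id_apply]

/- Rotating each monomial and rescaling by `α⁻¹` on `x, y` and by `α²` on `z` restores the
potential, except that the coefficients of `yyz` and `yzy` are off by `3` and `-3α`; the shear
`x ↦ x + 3y` repairs exactly these two terms, coming from `α • xyz` and `-α² • xzy` after
rotation. -/
theorem map_map_id_cyclic_potentialP₂
    {φ : (V ⊗[k] (V ⊗[k] V)) →ₗ[k] (V ⊗[k] (V ⊗[k] V))}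
    (hφ : ∀ a b c : V, φ (a ⊗ₜ[k] (b ⊗ₜ[k] c)) = c ⊗ₜ[k] (a ⊗ₜ[k] b))
    {α : k} (hα : α ≠ 0) {θ : V →ₗ[k] V} {x y z : V}
    (hx : θ x = α⁻¹ • x + (3 * α⁻¹) • y) (hy : θ y = α⁻¹ • y) (hz : θ z = α ^ 2 • z) :
    map θ (map LinearMap.id LinearMap.id) (φ (potentialP₂ α x y z)) = potentialP₂ α x y z := by
  simp only [potentialP₂, map_add, map_sub, map_smul, map_map_id_cyclic_tmul θ hφ, hx, hy, hz,
    add_tmul, ← smul_tmul', smul_smul]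
  match_scalars <;> field_simp <;> ring

-- Column `i` lists the coordinates of the image of `B i`, as in `Matrix.toLin_self`.
def matrixP₂ (α : k) : Matrix (Fin 3) (Fin 3) k :=
  !![α⁻¹, 0, 0; 3 * α⁻¹, α⁻¹, 0; 0, 0, α ^ 2]

theorem det_matrixP₂ {α : k} (hα : α ≠ 0) : (matrixP₂ α).det = 1 := by
  simp [matrixP₂, Matrix.det_fin_three, field]

theorem isUnit_det_toMatrix_toLin_matrixP₂ (B : Module.Basis (Fin 3) k V) {α : k} (hα : α ≠ 0) :
    IsUnit (LinearMap.toMatrix B B (Matrix.toLin B B (matrixP₂ α))).det := by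
  rw [LinearMap.toMatrix_toLin, det_matrixP₂ hα]
  exact isUnit_one

theorem toLin_matrixP₂_apply (B : Module.Basis (Fin 3) k V) (α : k) :
    Matrix.toLin B B (matrixP₂ α) (B 0) = α⁻¹ • B 0 + (3 * α⁻¹) • B 1 ∧
      Matrix.toLin B B (matrixP₂ α) (B 1) = α⁻¹ • B 1 ∧
      Matrix.toLin B B (matrixP₂ α) (B 2) = α ^ 2 • B 2 := by
  simp [Matrix.toLin_self, Fin.sum_univ_three, matrixP₂]

end

theorem stmt_5_general (k : Type*) [Field k]
    (V : Type*) [AddCommGroup V] [Module k V] (B : Module.Basis (Fin 3) k V)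
    (φ : (V ⊗[k] (V ⊗[k] V)) →ₗ[k] (V ⊗[k] (V ⊗[k] V)))
    (hφ : ∀ a b c : V, φ (a ⊗ₜ[k] (b ⊗ₜ[k] c)) = c ⊗ₜ[k] (a ⊗ₜ[k] b))
    (α : k) (h : α ≠ 0) :
    let x := B 0; let y := B 1; let z := B 2
    let t : V → V → V → V ⊗[k] (V ⊗[k] V) := fun u v w => u ⊗ₜ[k] (v ⊗ₜ[k] w)
    let w := t x y z + α • t y z x + α^2 • t z x y - α • t x z y - α^2 • t z y x
      - t y x z + t y y z - (2*α) • t y z y + α^2 • t z y y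
    ∃ θ : V ≃ₗ[k] V,
      TensorProduct.map θ.toLinearMap
        (TensorProduct.map (LinearMap.id : V →ₗ[k] V) (LinearMap.id : V →ₗ[k] V))
        (φ w) = w := by
  obtain ⟨hx, hy, hz⟩ := toLin_matrixP₂_apply B α
  refine ⟨LinearEquiv.ofIsUnitDet (isUnit_det_toMatrix_toLin_matrixP₂ B h), ?_⟩
  exact map_map_id_cyclic_potentialP₂ hφ h hx hy hz

theorem stmt_5 (k : Type*) [Field k] [IsAlgClosed k] [CharZero k]
    (V : Type*) [AddCommGroup V] [Module k V] (B : Module.Basis (Fin 3) k V)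
    (φ : (V ⊗[k] (V ⊗[k] V)) →ₗ[k] (V ⊗[k] (V ⊗[k] V)))
    (hφ : ∀ a b c : V, φ (a ⊗ₜ[k] (b ⊗ₜ[k] c)) = c ⊗ₜ[k] (a ⊗ₜ[k] b))
    (α : k) (h : α ≠ 0) :
    let x := B 0; let y := B 1; let z := B 2
    let t : V → V → V → V ⊗[k] (V ⊗[k] V) := fun u v w => u ⊗ₜ[k] (v ⊗ₜ[k] w)
    let w := t x y z + α • t y z x + α^2 • t z x y - α • t x z y - α^2 • t z y x
      - t y x z + t y y z - (2*α) • t y z y + α^2 • t z y y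
    ∃ θ : V ≃ₗ[k] V,
      TensorProduct.map θ.toLinearMap
        (TensorProduct.map (LinearMap.id : V →ₗ[k] V) (LinearMap.id : V →ₗ[k] V))
        (φ w) = w :=
  stmt_5_general k V B φ hφ α h
end

section
/- (Type P₃) The potential w = −xyz − yzx − zxy + xzy + zyx + yxz − zzx + 2·zxz − xzz − zyy + zyz + zzy − yyz + 2·yzy − 2·yzz − zzz ∈ V⊗V⊗V is a twisted superpotential; that is, there exists a linear automorphism θ of V such that (θ⊗id⊗id)(φ(w)) = w. -/
open TensorProduct

/-! Group `w` by its last letter, `w = ∑_c w_c ⊗ c`, and by its first letter,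
`w = ∑_a a ⊗ wᵃ`. Since `φ(w) = ∑_c c ⊗ w_c`, the condition `(θ ⊗ id ⊗ id)(φ w) = w` says
`∑_c θ(c) ⊗ w_c = ∑_a a ⊗ wᵃ`, and matching the two sides yields the unipotent automorphism
`x ↦ x + 3y + 3z`, `y ↦ y + 3z`, `z ↦ z`. With this `θ` the identity is a finite computation
on pure tensors. -/

namespace Matrix

variable {R : Type*} [CommRing R]

theorem unitriangular_fin_three_mul_inv (a b c : R) :
    !![1, 0, 0; a, 1, 0; b, c, 1] * !![1, 0, 0; -a, 1, 0; a * c - b, -c, 1] = 1 := by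
  simp only [mul_fin_three, one_fin_three]
  congr 1
  ring_nf

theorem unitriangular_fin_three_inv_mul (a b c : R) :
    !![1, 0, 0; -a, 1, 0; a * c - b, -c, 1] * !![1, 0, 0; a, 1, 0; b, c, 1] = 1 := by
  simp only [mul_fin_three, one_fin_three]
  congr 1
  ring_nf

end Matrix

namespace Module.Basis

variable {R V : Type*} [CommRing R] [AddCommGroup V] [Module R V] (B : Basis (Fin 3) R V)

noncomputable def unitriangularEquiv (a b c : R) : V ≃ₗ[R] V :=
  Matrix.toLinOfInv B B (Matrix.unitriangular_fin_three_mul_inv a b c)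
    (Matrix.unitriangular_fin_three_inv_mul a b c)

variable (a b c : R)

theorem unitriangularEquiv_apply_zero :
    B.unitriangularEquiv a b c (B 0) = B 0 + a • B 1 + b • B 2 := by
  simp [unitriangularEquiv, Fin.sum_univ_three, add_assoc]

theorem unitriangularEquiv_apply_one : B.unitriangularEquiv a b c (B 1) = B 1 + c • B 2 := by
  simp [unitriangularEquiv, Fin.sum_univ_three]

theorem unitriangularEquiv_apply_two : B.unitriangularEquiv a b c (B 2) = B 2 := by
  simp [unitriangularEquiv, Fin.sum_univ_three]

end Module.Basis

theorem stmt_6_general (k : Type*) [Field k]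
    (V : Type*) [AddCommGroup V] [Module k V] (B : Module.Basis (Fin 3) k V)
    (φ : (V ⊗[k] (V ⊗[k] V)) →ₗ[k] (V ⊗[k] (V ⊗[k] V)))
    (hφ : ∀ a b c : V, φ (a ⊗ₜ[k] (b ⊗ₜ[k] c)) = c ⊗ₜ[k] (a ⊗ₜ[k] b)) :
    let x := B 0; let y := B 1; let z := B 2
    let t : V → V → V → V ⊗[k] (V ⊗[k] V) := fun u v w => u ⊗ₜ[k] (v ⊗ₜ[k] w)
    let w := - t x y z - t y z x - t z x y + t x z y + t z y x + t y x z
      - t z z x + (2:k) • t z x z - t x z z - t z y y + t z y z + t z z y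
      - t y y z + (2:k) • t y z y - (2:k) • t y z z - t z z z
    ∃ θ : V ≃ₗ[k] V,
      TensorProduct.map θ.toLinearMap
        (TensorProduct.map (LinearMap.id : V →ₗ[k] V) (LinearMap.id : V →ₗ[k] V))
        (φ w) = w := by
  intro x y z t w
  refine ⟨B.unitriangularEquiv 3 3 3, ?_⟩
  simp only [w, t, x, y, z, map_add, map_sub, map_neg, map_smul, hφ, map_tmul,
    LinearMap.id_apply, LinearEquiv.coe_coe, B.unitriangularEquiv_apply_zero,
    B.unitriangularEquiv_apply_one, B.unitriangularEquiv_apply_two, add_tmul, ← smul_tmul']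
  module

theorem stmt_6 (k : Type*) [Field k] [IsAlgClosed k] [CharZero k]
    (V : Type*) [AddCommGroup V] [Module k V] (B : Module.Basis (Fin 3) k V)
    (φ : (V ⊗[k] (V ⊗[k] V)) →ₗ[k] (V ⊗[k] (V ⊗[k] V)))
    (hφ : ∀ a b c : V, φ (a ⊗ₜ[k] (b ⊗ₜ[k] c)) = c ⊗ₜ[k] (a ⊗ₜ[k] b)) :
    let x := B 0; let y := B 1; let z := B 2
    let t : V → V → V → V ⊗[k] (V ⊗[k] V) := fun u v w => u ⊗ₜ[k] (v ⊗ₜ[k] w)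
    let w := - t x y z - t y z x - t z x y + t x z y + t z y x + t y x z
      - t z z x + (2:k) • t z x z - t x z z - t z y y + t z y z + t z z y
      - t y y z + (2:k) • t y z y - (2:k) • t y z z - t z z z
    ∃ θ : V ≃ₗ[k] V,
      TensorProduct.map θ.toLinearMap
        (TensorProduct.map (LinearMap.id : V →ₗ[k] V) (LinearMap.id : V →ₗ[k] V))
        (φ w) = w :=
  stmt_6_general k V B φ hφ
end

section
/- (Type S₁) For α, β, γ ∈ k with αβγ ≠ 0 and αβγ ≠ 1, the potential w = β·xyz + γ·yzx + α·zxy − αβ·xzy − αγ·zyx − βγ·yxz ∈ V⊗V⊗V is a twisted superpotential; that is, there exists a linear automorphism θ of V such that (θ⊗id⊗id)(φ(w)) = w. -/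
open TensorProduct

/-!
Both `w` and `φ w` are combinations of the same six monomials, and `θ ⊗ id ⊗ id` only rescales a
monomial according to its first letter. Comparing coefficients forces `θ` to be diagonal with
eigenvalues `β/γ, γ/α, α/β` on `x, y, z`; since `αβγ ≠ 0` these are units, and the three ratios are
compatible on all six monomials.
-/

section

variable {k V : Type*} [Field k] [AddCommGroup V] [Module k V]

def potentialS1 (α β γ : k) (x y z : V) : V ⊗[k] (V ⊗[k] V) :=
  β • x ⊗ₜ (y ⊗ₜ z) + γ • y ⊗ₜ (z ⊗ₜ x) + α • z ⊗ₜ (x ⊗ₜ y)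
    - (α * β) • x ⊗ₜ (z ⊗ₜ y) - (α * γ) • z ⊗ₜ (y ⊗ₜ x) - (β * γ) • y ⊗ₜ (x ⊗ₜ z)

theorem cyclicShift_potentialS1 (φ : V ⊗[k] (V ⊗[k] V) →ₗ[k] V ⊗[k] (V ⊗[k] V))
    (hφ : ∀ a b c : V, φ (a ⊗ₜ[k] (b ⊗ₜ[k] c)) = c ⊗ₜ[k] (a ⊗ₜ[k] b))
    (α β γ : k) (x y z : V) :
    φ (potentialS1 α β γ x y z) =
      γ • x ⊗ₜ (y ⊗ₜ z) + α • y ⊗ₜ (z ⊗ₜ x) + β • z ⊗ₜ (x ⊗ₜ y)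
        - (α * γ) • x ⊗ₜ (z ⊗ₜ y) - (β * γ) • z ⊗ₜ (y ⊗ₜ x) - (α * β) • y ⊗ₜ (x ⊗ₜ z) := by
  simp only [potentialS1, map_add, map_sub, map_smul, hφ]
  abel

theorem map_rescale_cyclicShift_potentialS1 {α β γ : k} (hα : α ≠ 0) (hβ : β ≠ 0) (hγ : γ ≠ 0)
    (θ : V →ₗ[k] V) {x y z : V}
    (hx : θ x = (β / γ) • x) (hy : θ y = (γ / α) • y) (hz : θ z = (α / β) • z) :
    map θ (map LinearMap.id LinearMap.id)
        (γ • x ⊗ₜ (y ⊗ₜ z) + α • y ⊗ₜ (z ⊗ₜ x) + β • z ⊗ₜ (x ⊗ₜ y)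
          - (α * γ) • x ⊗ₜ (z ⊗ₜ y) - (β * γ) • z ⊗ₜ (y ⊗ₜ x) - (α * β) • y ⊗ₜ (x ⊗ₜ z)) =
      potentialS1 α β γ x y z := by
  have e₁ : γ * (β / γ) = β := by field_simp
  have e₂ : α * (γ / α) = γ := by field_simp
  have e₃ : β * (α / β) = α := by field_simp
  have e₄ : α * γ * (β / γ) = α * β := by field_simp
  have e₅ : β * γ * (α / β) = α * γ := by field_simp
  have e₆ : α * β * (γ / α) = β * γ := by field_simp
  simp only [potentialS1, map_add, map_sub, map_smul, map_tmul, LinearMap.id_apply, hx, hy, hz,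
    smul_tmul', smul_smul, e₁, e₂, e₃, e₄, e₅, e₆]

end

theorem stmt_7_general (k : Type*) [Field k]
    (V : Type*) [AddCommGroup V] [Module k V] (B : Module.Basis (Fin 3) k V)
    (φ : (V ⊗[k] (V ⊗[k] V)) →ₗ[k] (V ⊗[k] (V ⊗[k] V)))
    (hφ : ∀ a b c : V, φ (a ⊗ₜ[k] (b ⊗ₜ[k] c)) = c ⊗ₜ[k] (a ⊗ₜ[k] b))
    (α β γ : k) (h0 : α * β * γ ≠ 0) :
    let x := B 0; let y := B 1; let z := B 2
    let t : V → V → V → V ⊗[k] (V ⊗[k] V) := fun u v w => u ⊗ₜ[k] (v ⊗ₜ[k] w)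
    let w := β • t x y z + γ • t y z x + α • t z x y
      - (α*β) • t x z y - (α*γ) • t z y x - (β*γ) • t y x z
    ∃ θ : V ≃ₗ[k] V,
      TensorProduct.map θ.toLinearMap
        (TensorProduct.map (LinearMap.id : V →ₗ[k] V) (LinearMap.id : V →ₗ[k] V))
        (φ w) = w := by
  intro x y z t w
  obtain ⟨⟨hα, hβ⟩, hγ⟩ : (α ≠ 0 ∧ β ≠ 0) ∧ γ ≠ 0 := by simpa only [mul_ne_zero_iff] using h0
  let c : Fin 3 → kˣ := ![Units.mk0 (β / γ) (div_ne_zero hβ hγ),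
    Units.mk0 (γ / α) (div_ne_zero hγ hα), Units.mk0 (α / β) (div_ne_zero hα hβ)]
  let θ := B.equiv (B.unitsSMul c) (Equiv.refl _)
  have hθ (i : Fin 3) : θ (B i) = (c i : k) • B i := by
    rw [B.equiv_apply, B.unitsSMul_apply, Units.smul_def, Equiv.refl_apply]
  refine ⟨θ, ?_⟩
  rw [show w = potentialS1 α β γ x y z from rfl, cyclicShift_potentialS1 φ hφ]
  exact map_rescale_cyclicShift_potentialS1 hα hβ hγ _ (hθ 0) (hθ 1) (hθ 2)

theorem stmt_7 (k : Type*) [Field k] [IsAlgClosed k] [CharZero k]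
    (V : Type*) [AddCommGroup V] [Module k V] (B : Module.Basis (Fin 3) k V)
    (φ : (V ⊗[k] (V ⊗[k] V)) →ₗ[k] (V ⊗[k] (V ⊗[k] V)))
    (hφ : ∀ a b c : V, φ (a ⊗ₜ[k] (b ⊗ₜ[k] c)) = c ⊗ₜ[k] (a ⊗ₜ[k] b))
    (α β γ : k) (h0 : α * β * γ ≠ 0) (h1 : α * β * γ ≠ 1) :
    let x := B 0; let y := B 1; let z := B 2
    let t : V → V → V → V ⊗[k] (V ⊗[k] V) := fun u v w => u ⊗ₜ[k] (v ⊗ₜ[k] w)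
    let w := β • t x y z + γ • t y z x + α • t z x y
      - (α*β) • t x z y - (α*γ) • t z y x - (β*γ) • t y x z
    ∃ θ : V ≃ₗ[k] V,
      TensorProduct.map θ.toLinearMap
        (TensorProduct.map (LinearMap.id : V →ₗ[k] V) (LinearMap.id : V →ₗ[k] V))
        (φ w) = w :=
  stmt_7_general k V B φ hφ α β γ h0
end

section
/- (Type S₂) For α, β ∈ k with αβ ≠ 0, the potential w = −yzx − xzy + β⁻¹·xxz + α⁻¹·zxx + α·yyz + β·zyy ∈ V⊗V⊗V is a twisted superpotential; that is, there exists a linear automorphism θ of V such that (θ⊗id⊗id)(φ(w)) = w. -/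
open TensorProduct

theorem Module.Basis.exists_linearEquiv_apply_eq_smul {ι R M : Type*} [Semiring R]
    [AddCommMonoid M] [Module R M] (b : Module.Basis ι R M) (σ : Equiv.Perm ι) {c : ι → R}
    (hc : ∀ i, IsUnit (c i)) : ∃ θ : M ≃ₗ[R] M, ∀ i, θ (b i) = c i • b (σ i) :=
  ⟨b.equiv ((b.reindex σ.symm).isUnitSMul hc) (Equiv.refl ι), fun i => by
    simp [Module.Basis.equiv_apply, Module.Basis.isUnitSMul_apply, Module.Basis.reindex_apply]⟩

theorem stmt_8_general (k : Type*) [Field k]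
    (V : Type*) [AddCommGroup V] [Module k V] (B : Module.Basis (Fin 3) k V)
    (φ : (V ⊗[k] (V ⊗[k] V)) →ₗ[k] (V ⊗[k] (V ⊗[k] V)))
    (hφ : ∀ a b c : V, φ (a ⊗ₜ[k] (b ⊗ₜ[k] c)) = c ⊗ₜ[k] (a ⊗ₜ[k] b))
    (α β : k) (h : α * β ≠ 0) :
    let x := B 0; let y := B 1; let z := B 2
    let t : V → V → V → V ⊗[k] (V ⊗[k] V) := fun u v w => u ⊗ₜ[k] (v ⊗ₜ[k] w)
    let w := - t y z x - t x z y + β⁻¹ • t x x z + α⁻¹ • t z x x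
      + α • t y y z + β • t z y y
    ∃ θ : V ≃ₗ[k] V,
      TensorProduct.map θ.toLinearMap
        (TensorProduct.map (LinearMap.id : V →ₗ[k] V) (LinearMap.id : V →ₗ[k] V))
        (φ w) = w := by
  intro x y z t w
  obtain ⟨hα, hβ⟩ := mul_ne_zero_iff.mp h
  -- φ moves the last letter of each monomial to the front; θ must turn that letter back
  -- into the first letter of another monomial of w, which forces x ↔ y and z ↦ z up to scalars.
  obtain ⟨θ, hθ⟩ := B.exists_linearEquiv_apply_eq_smul (Equiv.swap 0 1)
    (c := ![-α, -β⁻¹, β * α⁻¹]) (by intro i; fin_cases i <;> simp [hα, hβ])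
  refine ⟨θ, ?_⟩
  have hθx : θ x = (-α) • y := hθ 0
  have hθy : θ y = (-β⁻¹) • x := hθ 1
  have hθz : θ z = (β * α⁻¹) • z := hθ 2
  simp only [w, t, map_add, map_sub, map_neg, map_smul, hφ, map_tmul, LinearEquiv.coe_coe,
    LinearMap.id_apply, hθx, hθy, hθz, ← smul_tmul', smul_smul]
  match_scalars <;> field_simp

theorem stmt_8 (k : Type*) [Field k] [IsAlgClosed k] [CharZero k]
    (V : Type*) [AddCommGroup V] [Module k V] (B : Module.Basis (Fin 3) k V)
    (φ : (V ⊗[k] (V ⊗[k] V)) →ₗ[k] (V ⊗[k] (V ⊗[k] V)))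
    (hφ : ∀ a b c : V, φ (a ⊗ₜ[k] (b ⊗ₜ[k] c)) = c ⊗ₜ[k] (a ⊗ₜ[k] b))
    (α β : k) (h : α * β ≠ 0) :
    let x := B 0; let y := B 1; let z := B 2
    let t : V → V → V → V ⊗[k] (V ⊗[k] V) := fun u v w => u ⊗ₜ[k] (v ⊗ₜ[k] w)
    let w := - t y z x - t x z y + β⁻¹ • t x x z + α⁻¹ • t z x x
      + α • t y y z + β • t z y y
    ∃ θ : V ≃ₗ[k] V,
      TensorProduct.map θ.toLinearMap
        (TensorProduct.map (LinearMap.id : V →ₗ[k] V) (LinearMap.id : V →ₗ[k] V))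
        (φ w) = w :=
  stmt_8_general k V B φ hφ α β h
end

section
/- (Type S'₂) The potential w = −zxy − yxz + xyy + yyx + xzz + zzx + xxx ∈ V⊗V⊗V is a twisted superpotential; that is, there exists a linear automorphism θ of V such that (θ⊗id⊗id)(φ(w)) = w. -/
/-!
For `θ` fixing `x` with `y ↦ -z`, `z ↦ -y`, the map `(θ ⊗ id ⊗ id) ∘ φ` sends `u ⊗ v ⊗ w` to
`θ w ⊗ u ⊗ v`; it fixes `xxx` and permutes the other six signed terms of the potential
cyclically: `xyy ↦ -zxy ↦ zzx ↦ xzz ↦ -yxz ↦ yyx ↦ xyy`.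
-/

open TensorProduct

section

variable {k V : Type*} [CommRing k] [AddCommGroup V] [Module k V]

namespace Module.Basis

noncomputable def negSwapTail (b : Basis (Fin 3) k V) : V ≃ₗ[k] V :=
  LinearEquiv.ofInvolutive (b.constr k ![b 0, -b 2, -b 1]) <| LinearMap.congr_fun <|
    show b.constr k ![b 0, -b 2, -b 1] ∘ₗ b.constr k ![b 0, -b 2, -b 1] = LinearMap.id from
      b.ext fun i => by fin_cases i <;> simp [-constr_apply_fintype, constr_basis]

variable (b : Basis (Fin 3) k V)

theorem negSwapTail_apply (v : V) : b.negSwapTail v = b.constr k ![b 0, -b 2, -b 1] v := rfl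

@[simp]
theorem negSwapTail_apply_zero : b.negSwapTail (b 0) = b 0 := by
  simp [negSwapTail_apply]

@[simp]
theorem negSwapTail_apply_one : b.negSwapTail (b 1) = -b 2 := by
  simp [negSwapTail_apply]

@[simp]
theorem negSwapTail_apply_two : b.negSwapTail (b 2) = -b 1 := by
  simp [negSwapTail_apply]

end Module.Basis

theorem map_map_id_cycle_tmul (θ : V →ₗ[k] V) (φ : V ⊗[k] (V ⊗[k] V) →ₗ[k] V ⊗[k] (V ⊗[k] V))
    (hφ : ∀ a b c : V, φ (a ⊗ₜ[k] (b ⊗ₜ[k] c)) = c ⊗ₜ[k] (a ⊗ₜ[k] b)) (a b c : V) :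
    TensorProduct.map θ (TensorProduct.map LinearMap.id LinearMap.id) (φ (a ⊗ₜ[k] (b ⊗ₜ[k] c))) =
      θ c ⊗ₜ[k] (a ⊗ₜ[k] b) := by
  simp [hφ]

end

theorem stmt_10_general (k : Type*) [Field k]
    (V : Type*) [AddCommGroup V] [Module k V] (B : Module.Basis (Fin 3) k V)
    (φ : (V ⊗[k] (V ⊗[k] V)) →ₗ[k] (V ⊗[k] (V ⊗[k] V)))
    (hφ : ∀ a b c : V, φ (a ⊗ₜ[k] (b ⊗ₜ[k] c)) = c ⊗ₜ[k] (a ⊗ₜ[k] b)) :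
    let x := B 0; let y := B 1; let z := B 2
    let t : V → V → V → V ⊗[k] (V ⊗[k] V) := fun u v w => u ⊗ₜ[k] (v ⊗ₜ[k] w)
    let w := - t z x y - t y x z + t x y y + t y y x + t x z z + t z z x + t x x x
    ∃ θ : V ≃ₗ[k] V,
      TensorProduct.map θ.toLinearMap
        (TensorProduct.map (LinearMap.id : V →ₗ[k] V) (LinearMap.id : V →ₗ[k] V))
        (φ w) = w := by
  intro x y z t w
  refine ⟨B.negSwapTail, ?_⟩
  simp only [w, t, x, y, z, map_add, map_sub, map_neg, map_map_id_cycle_tmul _ φ hφ,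
    LinearEquiv.coe_coe, B.negSwapTail_apply_zero, B.negSwapTail_apply_one,
    B.negSwapTail_apply_two, neg_tmul]
  abel

theorem stmt_10 (k : Type*) [Field k] [IsAlgClosed k] [CharZero k]
    (V : Type*) [AddCommGroup V] [Module k V] (B : Module.Basis (Fin 3) k V)
    (φ : (V ⊗[k] (V ⊗[k] V)) →ₗ[k] (V ⊗[k] (V ⊗[k] V)))
    (hφ : ∀ a b c : V, φ (a ⊗ₜ[k] (b ⊗ₜ[k] c)) = c ⊗ₜ[k] (a ⊗ₜ[k] b)) :
    let x := B 0; let y := B 1; let z := B 2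
    let t : V → V → V → V ⊗[k] (V ⊗[k] V) := fun u v w => u ⊗ₜ[k] (v ⊗ₜ[k] w)
    let w := - t z x y - t y x z + t x y y + t y y x + t x z z + t z z x + t x x x
    ∃ θ : V ≃ₗ[k] V,
      TensorProduct.map θ.toLinearMap
        (TensorProduct.map (LinearMap.id : V →ₗ[k] V) (LinearMap.id : V →ₗ[k] V))
        (φ w) = w :=
  stmt_10_general k V B φ hφ
end

section
/- (Type T₁) For α, β, γ ∈ k with α + β + γ ≠ 0, the potential w = β·xxy + (α−β+γ)·xyx + (α−β−γ)·yxy − α·yyx − yxz + yzx + β·yxx + xyz − xzy − α·xyy + zxy − zyx ∈ V⊗V⊗V is a twisted superpotential; that is, there exists a linear automorphism θ of V such that (θ⊗id⊗id)(φ(w)) = w. -/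
/-!
Take for `θ` the transvection fixing `x` and `y` and sending `z ↦ z + u`, where
`u = (2β - α - γ) x + (2α - β - γ) y`. The part of `w` involving `z` is the antisymmetrisation
of `xyz`, which is invariant under the cyclic shift `φ`; on it `θ ⊗ id ⊗ id` only adds
`u ⊗ (xy - yx)`. The remaining part `w₀` of `w` is a potential in `x, y` with
`w₀ - φ w₀ = u ⊗ (xy - yx)`, so the two defects cancel.
-/

open TensorProduct

theorem LinearEquiv.transvection_map_tmul {R V : Type*} [CommRing R] [AddCommGroup V]
    [Module R V] {f : Module.Dual R V} {v : V} (hfv : f v = 0) (a b c : V) :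
    TensorProduct.map (LinearEquiv.transvection hfv).toLinearMap
        (TensorProduct.map (LinearMap.id : V →ₗ[R] V) (LinearMap.id : V →ₗ[R] V))
        (a ⊗ₜ[R] (b ⊗ₜ[R] c)) =
      a ⊗ₜ[R] (b ⊗ₜ[R] c) + f a • v ⊗ₜ[R] (b ⊗ₜ[R] c) := by
  rw [TensorProduct.map_tmul, LinearEquiv.coe_coe, LinearEquiv.transvection.apply, add_tmul,
    TensorProduct.map_tmul, LinearMap.id_apply, LinearMap.id_apply, smul_tmul']

theorem stmt_11_general (k : Type*) [Field k]
    (V : Type*) [AddCommGroup V] [Module k V] (B : Module.Basis (Fin 3) k V)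
    (φ : (V ⊗[k] (V ⊗[k] V)) →ₗ[k] (V ⊗[k] (V ⊗[k] V)))
    (hφ : ∀ a b c : V, φ (a ⊗ₜ[k] (b ⊗ₜ[k] c)) = c ⊗ₜ[k] (a ⊗ₜ[k] b))
    (α β γ : k) :
    let x := B 0; let y := B 1; let z := B 2
    let t : V → V → V → V ⊗[k] (V ⊗[k] V) := fun u v w => u ⊗ₜ[k] (v ⊗ₜ[k] w)
    let w := β • t x x y + (α-β+γ) • t x y x + (α-β-γ) • t y x y
      - α • t y y x - t y x z + t y z x + β • t y x x + t x y z - t x z y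
      - α • t x y y + t z x y - t z y x
    ∃ θ : V ≃ₗ[k] V,
      TensorProduct.map θ.toLinearMap
        (TensorProduct.map (LinearMap.id : V →ₗ[k] V) (LinearMap.id : V →ₗ[k] V))
        (φ w) = w := by
  intro x y z t w
  have hx : B.coord 2 x = 0 := by simp [x]
  have hy : B.coord 2 y = 0 := by simp [y]
  have hz : B.coord 2 z = 1 := by simp [z]
  set u : V := (2*β - α - γ) • x + (2*α - β - γ) • y
  have hu : B.coord 2 u = 0 := by simp only [u, map_add, map_smul, hx, hy, smul_zero, add_zero]
  refine ⟨LinearEquiv.transvection hu, ?_⟩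
  simp only [w, t, map_add, map_sub, map_smul, hφ, LinearEquiv.transvection_map_tmul,
    hx, hy, hz, zero_smul, add_zero, one_smul, u, add_tmul, ← smul_tmul']
  module

theorem stmt_11 (k : Type*) [Field k] [IsAlgClosed k] [CharZero k]
    (V : Type*) [AddCommGroup V] [Module k V] (B : Module.Basis (Fin 3) k V)
    (φ : (V ⊗[k] (V ⊗[k] V)) →ₗ[k] (V ⊗[k] (V ⊗[k] V)))
    (hφ : ∀ a b c : V, φ (a ⊗ₜ[k] (b ⊗ₜ[k] c)) = c ⊗ₜ[k] (a ⊗ₜ[k] b))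
    (α β γ : k) (h : α + β + γ ≠ 0) :
    let x := B 0; let y := B 1; let z := B 2
    let t : V → V → V → V ⊗[k] (V ⊗[k] V) := fun u v w => u ⊗ₜ[k] (v ⊗ₜ[k] w)
    let w := β • t x x y + (α-β+γ) • t x y x + (α-β-γ) • t y x y
      - α • t y y x - t y x z + t y z x + β • t y x x + t x y z - t x z y
      - α • t x y y + t z x y - t z y x
    ∃ θ : V ≃ₗ[k] V,
      TensorProduct.map θ.toLinearMap
        (TensorProduct.map (LinearMap.id : V →ₗ[k] V) (LinearMap.id : V →ₗ[k] V))
        (φ w) = w :=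
  stmt_11_general k V B φ hφ α β γ
end

section
/- (Type T') For α, β ∈ k with α + 2β ≠ 0, the potential w = α·xxy − (α−2β)·xyx + (β²−αβ)·xyy + xyz − xzy + α·yxx − yxz + yzx − α·yzy + αβ²·yyy − (β²−αβ)·yyx − β·yyz + zxy − zyx − β·zyy ∈ V⊗V⊗V is a twisted superpotential; that is, there exists a linear automorphism θ of V such that (θ⊗id⊗id)(φ(w)) = w. -/
/-!
The twist is the unipotent automorphism `θ` fixing `y` with `x ↦ x + c y` and
`z ↦ z + 2c x + c² y`, where `c = α - β`. These maps satisfy `θ_{c+d} = θ_c ∘ θ_d`, so `θ_c` is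
invertible with inverse `θ_{-c}`; that `(θ ⊗ id ⊗ id) (φ w) = w` is then a direct expansion of
both sides in the basis of pure tensors.
-/

open TensorProduct

section
variable {R M : Type*} [CommRing R] [AddCommGroup M] [Module R M] (B : Module.Basis (Fin 3) R M)

noncomputable def shear (c : R) : M →ₗ[R] M :=
  B.constr R ![B 0 + c • B 1, B 1, (2 * c) • B 0 + c ^ 2 • B 1 + B 2]

@[simp] lemma shear_apply_zero (c : R) : shear B c (B 0) = B 0 + c • B 1 := by simp [shear]
@[simp] lemma shear_apply_one (c : R) : shear B c (B 1) = B 1 := by simp [shear]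
@[simp] lemma shear_apply_two (c : R) :
    shear B c (B 2) = (2 * c) • B 0 + c ^ 2 • B 1 + B 2 := by simp [shear]

lemma shear_zero : shear B 0 = LinearMap.id :=
  B.ext fun i => by fin_cases i <;> simp

lemma shear_add (c d : R) : shear B (c + d) = shear B c ∘ₗ shear B d :=
  B.ext fun i => by fin_cases i <;> simp <;> module

noncomputable def shearEquiv (c : R) : M ≃ₗ[R] M :=
  LinearEquiv.ofLinearMap (shear B c) (shear B (-c))
    (by rw [← shear_add, add_neg_cancel, shear_zero])
    (by rw [← shear_add, neg_add_cancel, shear_zero])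

noncomputable def typeT'Potential (α β : R) : M ⊗[R] (M ⊗[R] M) :=
  let x := B 0; let y := B 1; let z := B 2
  let t : M → M → M → M ⊗[R] (M ⊗[R] M) := fun u v w => u ⊗ₜ[R] (v ⊗ₜ[R] w)
  α • t x x y - (α-2*β) • t x y x + (β^2-α*β) • t x y y
      + t x y z - t x z y + α • t y x x - t y x z + t y z x - α • t y z y
      + (α*β^2) • t y y y - (β^2-α*β) • t y y x - β • t y y z
      + t z x y - t z y x - β • t z y y

lemma shear_cycle_typeT'Potential (φ : (M ⊗[R] (M ⊗[R] M)) →ₗ[R] (M ⊗[R] (M ⊗[R] M)))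
    (hφ : ∀ a b c : M, φ (a ⊗ₜ[R] (b ⊗ₜ[R] c)) = c ⊗ₜ[R] (a ⊗ₜ[R] b)) (α β : R) :
    map (shear B (α - β)) (map LinearMap.id LinearMap.id) (φ (typeT'Potential B α β)) =
      typeT'Potential B α β := by
  simp only [typeT'Potential, map_add, map_sub, map_smul, hφ, map_id, map_tmul,
    LinearMap.id_coe, id_eq, shear_apply_zero, shear_apply_one, shear_apply_two,
    add_tmul, ← smul_tmul']
  module

end

theorem stmt_13_general (k : Type*) [Field k]
    (V : Type*) [AddCommGroup V] [Module k V] (B : Module.Basis (Fin 3) k V)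
    (φ : (V ⊗[k] (V ⊗[k] V)) →ₗ[k] (V ⊗[k] (V ⊗[k] V)))
    (hφ : ∀ a b c : V, φ (a ⊗ₜ[k] (b ⊗ₜ[k] c)) = c ⊗ₜ[k] (a ⊗ₜ[k] b))
    (α β : k) :
    let x := B 0; let y := B 1; let z := B 2
    let t : V → V → V → V ⊗[k] (V ⊗[k] V) := fun u v w => u ⊗ₜ[k] (v ⊗ₜ[k] w)
    let w := α • t x x y - (α-2*β) • t x y x + (β^2-α*β) • t x y y
      + t x y z - t x z y + α • t y x x - t y x z + t y z x - α • t y z y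
      + (α*β^2) • t y y y - (β^2-α*β) • t y y x - β • t y y z
      + t z x y - t z y x - β • t z y y
    ∃ θ : V ≃ₗ[k] V,
      TensorProduct.map θ.toLinearMap
        (TensorProduct.map (LinearMap.id : V →ₗ[k] V) (LinearMap.id : V →ₗ[k] V))
        (φ w) = w :=
  ⟨shearEquiv B (α - β), shear_cycle_typeT'Potential B φ hφ α β⟩

theorem stmt_13 (k : Type*) [Field k] [IsAlgClosed k] [CharZero k]
    (V : Type*) [AddCommGroup V] [Module k V] (B : Module.Basis (Fin 3) k V)
    (φ : (V ⊗[k] (V ⊗[k] V)) →ₗ[k] (V ⊗[k] (V ⊗[k] V)))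
    (hφ : ∀ a b c : V, φ (a ⊗ₜ[k] (b ⊗ₜ[k] c)) = c ⊗ₜ[k] (a ⊗ₜ[k] b))
    (α β : k) (h : α + 2*β ≠ 0) :
    let x := B 0; let y := B 1; let z := B 2
    let t : V → V → V → V ⊗[k] (V ⊗[k] V) := fun u v w => u ⊗ₜ[k] (v ⊗ₜ[k] w)
    let w := α • t x x y - (α-2*β) • t x y x + (β^2-α*β) • t x y y
      + t x y z - t x z y + α • t y x x - t y x z + t y z x - α • t y z y
      + (α*β^2) • t y y y - (β^2-α*β) • t y y x - β • t y y z
      + t z x y - t z y x - β • t z y y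
    ∃ θ : V ≃ₗ[k] V,
      TensorProduct.map θ.toLinearMap
        (TensorProduct.map (LinearMap.id : V →ₗ[k] V) (LinearMap.id : V →ₗ[k] V))
        (φ w) = w :=
  stmt_13_general k V B φ hφ α β
end

section
/- (Type NC₂) The potential w = −2·xyx + xxz + zxx − 2·yxy + yyz + zyy + yzx + xzy ∈ V⊗V⊗V is a twisted superpotential; that is, there exists a linear automorphism θ of V such that (θ⊗id⊗id)(φ(w)) = w. -/
/-! The automorphism exchanging `x` and `y` and fixing `z` works: the cyclic shift `φ` followed by
this swap in the first factor permutes the eight monomials of `w`, e.g. `xyx ↦ xxy ↦ yxy`,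
`zxx ↦ xzx ↦ yzx`, and preserves their coefficients. -/

open TensorProduct

section

variable {k V : Type*} [CommRing k] [AddCommGroup V] [Module k V]

theorem map_first_tmul_of_cyclic (θ : V →ₗ[k] V)
    (φ : (V ⊗[k] (V ⊗[k] V)) →ₗ[k] (V ⊗[k] (V ⊗[k] V)))
    (hφ : ∀ a b c : V, φ (a ⊗ₜ[k] (b ⊗ₜ[k] c)) = c ⊗ₜ[k] (a ⊗ₜ[k] b)) (a b c : V) :
    TensorProduct.map θ (TensorProduct.map LinearMap.id LinearMap.id) (φ (a ⊗ₜ[k] (b ⊗ₜ[k] c)))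
      = θ c ⊗ₜ[k] (a ⊗ₜ[k] b) := by
  simp [hφ]

end

theorem stmt_14_general (k : Type*) [Field k]
    (V : Type*) [AddCommGroup V] [Module k V] (B : Module.Basis (Fin 3) k V)
    (φ : (V ⊗[k] (V ⊗[k] V)) →ₗ[k] (V ⊗[k] (V ⊗[k] V)))
    (hφ : ∀ a b c : V, φ (a ⊗ₜ[k] (b ⊗ₜ[k] c)) = c ⊗ₜ[k] (a ⊗ₜ[k] b)) :
    let x := B 0; let y := B 1; let z := B 2
    let t : V → V → V → V ⊗[k] (V ⊗[k] V) := fun u v w => u ⊗ₜ[k] (v ⊗ₜ[k] w)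
    let w := - (2:k) • t x y x + t x x z + t z x x - (2:k) • t y x y + t y y z
      + t z y y + t y z x + t x z y
    ∃ θ : V ≃ₗ[k] V,
      TensorProduct.map θ.toLinearMap
        (TensorProduct.map (LinearMap.id : V →ₗ[k] V) (LinearMap.id : V →ₗ[k] V))
        (φ w) = w := by
  intro x y z t w
  refine ⟨B.equiv B (Equiv.swap 0 1), ?_⟩
  have hθx : B.equiv B (Equiv.swap 0 1) x = y := by simp [x, y]
  have hθy : B.equiv B (Equiv.swap 0 1) y = x := by simp [x, y]
  have hθz : B.equiv B (Equiv.swap 0 1) z = z := by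
    simp [z, Equiv.swap_apply_of_ne_of_ne]
  simp only [w, t, map_add, map_sub, map_smul, LinearEquiv.coe_coe,
    map_first_tmul_of_cyclic _ φ hφ, hθx, hθy, hθz]
  module

theorem stmt_14 (k : Type*) [Field k] [IsAlgClosed k] [CharZero k]
    (V : Type*) [AddCommGroup V] [Module k V] (B : Module.Basis (Fin 3) k V)
    (φ : (V ⊗[k] (V ⊗[k] V)) →ₗ[k] (V ⊗[k] (V ⊗[k] V)))
    (hφ : ∀ a b c : V, φ (a ⊗ₜ[k] (b ⊗ₜ[k] c)) = c ⊗ₜ[k] (a ⊗ₜ[k] b)) :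
    let x := B 0; let y := B 1; let z := B 2
    let t : V → V → V → V ⊗[k] (V ⊗[k] V) := fun u v w => u ⊗ₜ[k] (v ⊗ₜ[k] w)
    let w := - (2:k) • t x y x + t x x z + t z x x - (2:k) • t y x y + t y y z
      + t z y y + t y z x + t x z y
    ∃ θ : V ≃ₗ[k] V,
      TensorProduct.map θ.toLinearMap
        (TensorProduct.map (LinearMap.id : V →ₗ[k] V) (LinearMap.id : V →ₗ[k] V))
        (φ w) = w :=
  stmt_14_general k V B φ hφ
end

section
/- (Type WL₁) For α, γ ∈ k with α ≠ 0 and α ≠ 1, the potential w = −(1+γ)·yyx + α(1+2γ)·yxy − α²(1+γ)·xyy + α²·xyz + yzx + α·zxy − α²·xzy − zyx − α·yxz ∈ V⊗V⊗V is a twisted superpotential; that is, there exists a linear automorphism θ of V such that (θ⊗id⊗id)(φ(w)) = w. -/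
/-!
Writing `w = ∑ c_{pqr} p ⊗ q ⊗ r`, the twisting condition says `∑_r c_{pqr} θ r = ∑_s c_{spq} s`
for all `p, q`, a linear system for `θ`. For the WL₁ potential it is solved by
`θ x = α² x`, `θ y = α⁻¹ y`, `θ z = α⁻¹ ((2 + 3γ) y + z)`, whose matrix is upper triangular with
determinant `1`.
-/

open TensorProduct

section Rotation

variable {R V : Type*} [CommSemiring R] [AddCommMonoid V] [Module R V]

lemma map_map_id_id_of_rotate (θ : V →ₗ[R] V) {φ : V ⊗[R] (V ⊗[R] V) →ₗ[R] V ⊗[R] (V ⊗[R] V)}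
    (hφ : ∀ a b c : V, φ (a ⊗ₜ[R] (b ⊗ₜ[R] c)) = c ⊗ₜ[R] (a ⊗ₜ[R] b)) (a b c : V) :
    map θ (map LinearMap.id LinearMap.id) (φ (a ⊗ₜ[R] (b ⊗ₜ[R] c))) = θ c ⊗ₜ[R] (a ⊗ₜ[R] b) := by
  rw [hφ, map_tmul, map_id, LinearMap.id_apply]

end Rotation

section TwistMatrix

variable {K V : Type*} [Field K] [AddCommGroup V] [Module K V]

def wl1TwistMatrix (α γ : K) : Matrix (Fin 3) (Fin 3) K :=
  !![α ^ 2, 0, 0; 0, α⁻¹, α⁻¹ * (2 + 3 * γ); 0, 0, α⁻¹]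

lemma det_wl1TwistMatrix {α : K} (hα : α ≠ 0) (γ : K) : (wl1TwistMatrix α γ).det = 1 := by
  simp [wl1TwistMatrix, Matrix.det_fin_three, hα, sq]

lemma toLin_wl1TwistMatrix (B : Module.Basis (Fin 3) K V) (α γ : K) :
    Matrix.toLin B B (wl1TwistMatrix α γ) (B 0) = α ^ 2 • B 0 ∧
    Matrix.toLin B B (wl1TwistMatrix α γ) (B 1) = α⁻¹ • B 1 ∧
    Matrix.toLin B B (wl1TwistMatrix α γ) (B 2) = (α⁻¹ * (2 + 3 * γ)) • B 1 + α⁻¹ • B 2 := by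
  simp [Matrix.toLin_self, Fin.sum_univ_three, wl1TwistMatrix]

end TwistMatrix

theorem stmt_15_general (k : Type*) [Field k]
    (V : Type*) [AddCommGroup V] [Module k V] (B : Module.Basis (Fin 3) k V)
    (φ : (V ⊗[k] (V ⊗[k] V)) →ₗ[k] (V ⊗[k] (V ⊗[k] V)))
    (hφ : ∀ a b c : V, φ (a ⊗ₜ[k] (b ⊗ₜ[k] c)) = c ⊗ₜ[k] (a ⊗ₜ[k] b))
    (α γ : k) (h0 : α ≠ 0) :
    let x := B 0; let y := B 1; let z := B 2
    let t : V → V → V → V ⊗[k] (V ⊗[k] V) := fun u v w => u ⊗ₜ[k] (v ⊗ₜ[k] w)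
    let w := - (1+γ) • t y y x + (α*(1+2*γ)) • t y x y - (α^2*(1+γ)) • t x y y
      + α^2 • t x y z + t y z x + α • t z x y - α^2 • t x z y
      - t z y x - α • t y x z
    ∃ θ : V ≃ₗ[k] V,
      TensorProduct.map θ.toLinearMap
        (TensorProduct.map (LinearMap.id : V →ₗ[k] V) (LinearMap.id : V →ₗ[k] V))
        (φ w) = w := by
  intro x y z t w
  have hdet : IsUnit (wl1TwistMatrix α γ).det := by
    rw [det_wl1TwistMatrix h0]
    exact isUnit_one
  refine ⟨(wl1TwistMatrix α γ).toLinearEquiv B hdet, ?_⟩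
  obtain ⟨hθx, hθy, hθz⟩ := toLin_wl1TwistMatrix B α γ
  simp only [w, t, x, y, z, map_add, map_sub, map_smul,
    map_map_id_id_of_rotate _ hφ, LinearEquiv.coe_coe, Matrix.toLinearEquiv_apply, hθx, hθy, hθz]
  simp only [add_tmul, ← smul_tmul', smul_smul]
  match_scalars <;> field_simp <;> ring

theorem stmt_15 (k : Type*) [Field k] [IsAlgClosed k] [CharZero k]
    (V : Type*) [AddCommGroup V] [Module k V] (B : Module.Basis (Fin 3) k V)
    (φ : (V ⊗[k] (V ⊗[k] V)) →ₗ[k] (V ⊗[k] (V ⊗[k] V)))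
    (hφ : ∀ a b c : V, φ (a ⊗ₜ[k] (b ⊗ₜ[k] c)) = c ⊗ₜ[k] (a ⊗ₜ[k] b))
    (α γ : k) (h0 : α ≠ 0) (h1 : α ≠ 1) :
    let x := B 0; let y := B 1; let z := B 2
    let t : V → V → V → V ⊗[k] (V ⊗[k] V) := fun u v w => u ⊗ₜ[k] (v ⊗ₜ[k] w)
    let w := - (1+γ) • t y y x + (α*(1+2*γ)) • t y x y - (α^2*(1+γ)) • t x y y
      + α^2 • t x y z + t y z x + α • t z x y - α^2 • t x z y
      - t z y x - α • t y x z
    ∃ θ : V ≃ₗ[k] V,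
      TensorProduct.map θ.toLinearMap
        (TensorProduct.map (LinearMap.id : V →ₗ[k] V) (LinearMap.id : V →ₗ[k] V))
        (φ w) = w :=
  stmt_15_general k V B φ hφ α γ h0
end

section
/- (Type TL₁) For α ∈ k with α ≠ 0, the potential w = −α⁻²·zxy + α⁻¹·zyx + α²·yxz − α·yzx + α⁻¹·xzy − α·xyz − xxx ∈ V⊗V⊗V is a twisted superpotential; that is, there exists a linear automorphism θ of V such that (θ⊗id⊗id)(φ(w)) = w. -/
/-! Rotating a monomial `abc` to `cab` multiplies its coefficient in `w` by `α³` when `c = y`,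
by `α⁻³` when `c = z`, and by `1` when `c = x`, so the diagonal automorphism
`θ = diag(1, α³, α⁻³)` in the basis `x, y, z` undoes the rotation. -/

open TensorProduct

namespace Module.Basis

variable {ι k V : Type*} [Field k] [AddCommGroup V] [Module k V]

noncomputable def diagEquiv (B : Basis ι k V) (c : ι → kˣ) : V ≃ₗ[k] V :=
  B.equiv (B.unitsSMul c) (Equiv.refl ι)

@[simp]
theorem diagEquiv_apply_self (B : Basis ι k V) (c : ι → kˣ) (i : ι) :
    B.diagEquiv c (B i) = c i • B i := by
  simp [diagEquiv, unitsSMul_apply]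

end Module.Basis

theorem stmt_16_general (k : Type*) [Field k]
    (V : Type*) [AddCommGroup V] [Module k V] (B : Module.Basis (Fin 3) k V)
    (φ : (V ⊗[k] (V ⊗[k] V)) →ₗ[k] (V ⊗[k] (V ⊗[k] V)))
    (hφ : ∀ a b c : V, φ (a ⊗ₜ[k] (b ⊗ₜ[k] c)) = c ⊗ₜ[k] (a ⊗ₜ[k] b))
    (α : k) (h : α ≠ 0) :
    let x := B 0; let y := B 1; let z := B 2
    let t : V → V → V → V ⊗[k] (V ⊗[k] V) := fun u v w => u ⊗ₜ[k] (v ⊗ₜ[k] w)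
    let w := - (α^2)⁻¹ • t z x y + α⁻¹ • t z y x + α^2 • t y x z - α • t y z x
      + α⁻¹ • t x z y - α • t x y z - t x x x
    ∃ θ : V ≃ₗ[k] V,
      TensorProduct.map θ.toLinearMap
        (TensorProduct.map (LinearMap.id : V →ₗ[k] V) (LinearMap.id : V →ₗ[k] V))
        (φ w) = w := by
  intro x y z t w
  let a : kˣ := Units.mk0 (α ^ 3) (pow_ne_zero 3 h)
  refine ⟨B.diagEquiv ![1, a, a⁻¹], ?_⟩
  have hx : B.diagEquiv ![1, a, a⁻¹] x = x := by simp [x]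
  have hy : B.diagEquiv ![1, a, a⁻¹] y = α ^ 3 • y := by simp [y, a, Units.smul_def]
  have hz : B.diagEquiv ![1, a, a⁻¹] z = (α ^ 3)⁻¹ • z := by simp [z, a, Units.smul_def]
  simp only [w, t, map_add, map_sub, map_smul, hφ, LinearEquiv.coe_coe,
    TensorProduct.map_tmul, LinearMap.id_coe, id_eq, hx, hy, hz, ← smul_tmul', smul_smul]
  match_scalars <;> field_simp

theorem stmt_16 (k : Type*) [Field k] [IsAlgClosed k] [CharZero k]
    (V : Type*) [AddCommGroup V] [Module k V] (B : Module.Basis (Fin 3) k V)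
    (φ : (V ⊗[k] (V ⊗[k] V)) →ₗ[k] (V ⊗[k] (V ⊗[k] V)))
    (hφ : ∀ a b c : V, φ (a ⊗ₜ[k] (b ⊗ₜ[k] c)) = c ⊗ₜ[k] (a ⊗ₜ[k] b))
    (α : k) (h : α ≠ 0) :
    let x := B 0; let y := B 1; let z := B 2
    let t : V → V → V → V ⊗[k] (V ⊗[k] V) := fun u v w => u ⊗ₜ[k] (v ⊗ₜ[k] w)
    let w := - (α^2)⁻¹ • t z x y + α⁻¹ • t z y x + α^2 • t y x z - α • t y z x
      + α⁻¹ • t x z y - α • t x y z - t x x x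
    ∃ θ : V ≃ₗ[k] V,
      TensorProduct.map θ.toLinearMap
        (TensorProduct.map (LinearMap.id : V →ₗ[k] V) (LinearMap.id : V →ₗ[k] V))
        (φ w) = w :=
  stmt_16_general k V B φ hφ α h
end

section
/- (Type TL₂) For β ∈ k, the potential w = β·xxy + β·xyx + (−β²−1)·xxx + 2·yxy − yyx − 2β·yxx + zxy − zyx − β·zxx − β·xxz + 2β·xzx − yxz + yzx − xzy + xyz − xyy ∈ V⊗V⊗V is a twisted superpotential; that is, there exists a linear automorphism θ of V such that (θ⊗id⊗id)(φ(w)) = w. -/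
/-!
The twist is the unipotent automorphism `θ x = x`, `θ y = y + 3β x`, `θ z = z + 3 y + 3β x`,
obtained by comparing the coefficients of `w` with those of its rotation `φ w`. Given `θ`,
the identity `(θ ⊗ id ⊗ id) (φ w) = w` is a direct expansion in the basis monomials.
-/

open TensorProduct

section Twist

variable {k V : Type*} [CommRing k] [AddCommGroup V] [Module k V]

/-- Columns are the images of `x`, `y`, `z`. -/
def twistMatrix (β : k) : Matrix (Fin 3) (Fin 3) k :=
  !![1, 3 * β, 3 * β; 0, 1, 3; 0, 0, 1]

theorem det_twistMatrix (β : k) : (twistMatrix β).det = 1 := by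
  simp [twistMatrix, Matrix.det_fin_three]

noncomputable def twist (B : Module.Basis (Fin 3) k V) (β : k) : V ≃ₗ[k] V :=
  (twistMatrix β).toLinearEquiv B (by rw [det_twistMatrix]; exact isUnit_one)

variable (B : Module.Basis (Fin 3) k V) (β : k)

theorem twist_apply_zero : twist B β (B 0) = B 0 := by
  simp [twist, twistMatrix, Fin.sum_univ_three]

theorem twist_apply_one : twist B β (B 1) = (3 * β) • B 0 + B 1 := by
  simp [twist, twistMatrix, Fin.sum_univ_three]

theorem twist_apply_two : twist B β (B 2) = (3 * β) • B 0 + (3 : k) • B 1 + B 2 := by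
  simp [twist, twistMatrix, Fin.sum_univ_three]

end Twist

theorem stmt_17_general (k : Type*) [Field k]
    (V : Type*) [AddCommGroup V] [Module k V] (B : Module.Basis (Fin 3) k V)
    (φ : (V ⊗[k] (V ⊗[k] V)) →ₗ[k] (V ⊗[k] (V ⊗[k] V)))
    (hφ : ∀ a b c : V, φ (a ⊗ₜ[k] (b ⊗ₜ[k] c)) = c ⊗ₜ[k] (a ⊗ₜ[k] b))
    (β : k) :
    let x := B 0; let y := B 1; let z := B 2
    let t : V → V → V → V ⊗[k] (V ⊗[k] V) := fun u v w => u ⊗ₜ[k] (v ⊗ₜ[k] w)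
    let w := β • t x x y + β • t x y x + (-β^2-1) • t x x x + (2:k) • t y x y
      - t y y x - (2*β) • t y x x + t z x y - t z y x - β • t z x x
      - β • t x x z + (2*β) • t x z x - t y x z + t y z x - t x z y
      + t x y z - t x y y
    ∃ θ : V ≃ₗ[k] V,
      TensorProduct.map θ.toLinearMap
        (TensorProduct.map (LinearMap.id : V →ₗ[k] V) (LinearMap.id : V →ₗ[k] V))
        (φ w) = w := by
  intro x y z t w
  refine ⟨twist B β, ?_⟩
  simp only [w, t, map_add, map_sub, map_smul, hφ, map_tmul, LinearEquiv.coe_coe,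
    LinearMap.id_coe, id_eq, x, y, z, twist_apply_zero, twist_apply_one, twist_apply_two,
    add_tmul, ← smul_tmul']
  module

theorem stmt_17 (k : Type*) [Field k] [IsAlgClosed k] [CharZero k]
    (V : Type*) [AddCommGroup V] [Module k V] (B : Module.Basis (Fin 3) k V)
    (φ : (V ⊗[k] (V ⊗[k] V)) →ₗ[k] (V ⊗[k] (V ⊗[k] V)))
    (hφ : ∀ a b c : V, φ (a ⊗ₜ[k] (b ⊗ₜ[k] c)) = c ⊗ₜ[k] (a ⊗ₜ[k] b))
    (β : k) :
    let x := B 0; let y := B 1; let z := B 2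
    let t : V → V → V → V ⊗[k] (V ⊗[k] V) := fun u v w => u ⊗ₜ[k] (v ⊗ₜ[k] w)
    let w := β • t x x y + β • t x y x + (-β^2-1) • t x x x + (2:k) • t y x y
      - t y y x - (2*β) • t y x x + t z x y - t z y x - β • t z x x
      - β • t x x z + (2*β) • t x z x - t y x z + t y z x - t x z y
      + t x y z - t x y y
    ∃ θ : V ≃ₗ[k] V,
      TensorProduct.map θ.toLinearMap
        (TensorProduct.map (LinearMap.id : V →ₗ[k] V) (LinearMap.id : V →ₗ[k] V))
        (φ w) = w :=
  stmt_17_general k V B φ hφ β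
end

section
/- (Type T₁ superpotential, ATV criterion data) Let w₀ = xyz + yzx + zxy − (xzy + zyx + yxz) + (xxy + xyx + yxx) − (yyx + yxy + xyy) ∈ V⊗V⊗V. Then: (i) φ(w₀) = w₀, i.e. w₀ is a superpotential; (ii) the partial derivatives are ∂ₓw₀ = yz − zy + xy + yx − yy, ∂ᵧw₀ = zx − xz + xx − yx − xy, ∂_zw₀ = xy − yx, and these three elements of V⊗V are linearly independent over k; (iii) for the 3×3 matrix M with rows (y, x−y−z, y), (x−y+z, −x, −x), (−y, x, 0) (entries in V), in the free algebra k⟨x,y,z⟩ both the column product M·(x,y,z)ᵗ and the row product (x,y,z)·M equal the triple (∂ₓw₀, ∂ᵧw₀, ∂_zw₀); and (iv) for every (a,b,c) ∈ k³, if all nine 2×2 minors of M, viewed as commutative polynomials in x, y, z, vanish at (a,b,c), then (a,b,c) = (0,0,0). -/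
/-!
`w₀` is a signed sum of the cyclic orbits of `xyz`, `xzy`, `xxy` and `yyx`, each of which is
fixed by `φ`. Its partial derivatives have unitriangular coordinates at `y⊗z`, `z⊗x`, `x⊗y`.
The matrix identities hold in any ring. For (iv), the minors at the diagonal positions
`(0,0)` and `(1,1)` are `x²` and `y²`, and once `x = y = 0` the one at `(2,2)` is `z²`.
-/

open TensorProduct

namespace SuperpotentialT1

section Cyclic

variable {R V : Type*} [CommSemiring R] [AddCommMonoid V] [Module R V]

def cyclicTensor (a b c : V) : V ⊗[R] (V ⊗[R] V) :=
  a ⊗ₜ (b ⊗ₜ c) + b ⊗ₜ (c ⊗ₜ a) + c ⊗ₜ (a ⊗ₜ b)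

theorem map_cyclicTensor (φ : V ⊗[R] (V ⊗[R] V) →ₗ[R] V ⊗[R] (V ⊗[R] V))
    (hφ : ∀ a b c : V, φ (a ⊗ₜ (b ⊗ₜ c)) = c ⊗ₜ (a ⊗ₜ b)) (a b c : V) :
    φ (cyclicTensor a b c) = cyclicTensor a b c := by
  simp only [cyclicTensor, map_add, hφ]
  abel

end Cyclic

theorem linearIndependent_partials {R V : Type*} [CommRing R] [AddCommGroup V] [Module R V]
    (B : Module.Basis (Fin 3) R V) :
    LinearIndependent R
      ![B 1 ⊗ₜ[R] B 2 - B 2 ⊗ₜ[R] B 1 + B 0 ⊗ₜ[R] B 1 + B 1 ⊗ₜ[R] B 0 - B 1 ⊗ₜ[R] B 1,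
        B 2 ⊗ₜ[R] B 0 - B 0 ⊗ₜ[R] B 2 + B 0 ⊗ₜ[R] B 0 - B 1 ⊗ₜ[R] B 0 - B 0 ⊗ₜ[R] B 1,
        B 0 ⊗ₜ[R] B 1 - B 1 ⊗ₜ[R] B 0] := by
  let coords : V ⊗[R] V →ₗ[R] Fin 3 → R :=
    LinearMap.pi fun i => (B.tensorProduct B).coord (![(1, 2), (2, 0), (0, 1)] i)
  let U : Matrix (Fin 3) (Fin 3) R := !![1, 0, 1; 0, 1, -1; 0, 0, 1]
  have hU : IsUnit U := by
    rw [Matrix.isUnit_iff_isUnit_det, Matrix.det_fin_three]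
    simp [U]
  refine LinearIndependent.of_comp coords ?_
  convert Matrix.linearIndependent_rows_of_isUnit hU
  ext i j
  fin_cases i <;> fin_cases j <;>
    simp [coords, U, Module.Basis.tensorProduct_repr_tmul_apply]

section Matrix

variable {A : Type*} [Ring A] (X Y Z : A)

def factorMatrix : Matrix (Fin 3) (Fin 3) A :=
  !![Y, X - Y - Z, Y; X - Y + Z, -X, -X; -Y, X, 0]

theorem map_factorMatrix {B : Type*} [Ring B] (f : A →+* B) :
    (factorMatrix X Y Z).map f = factorMatrix (f X) (f Y) (f Z) := by
  ext i j
  fin_cases i <;> fin_cases j <;> simp [factorMatrix]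

theorem factorMatrix_mulVec :
    (factorMatrix X Y Z).mulVec ![X, Y, Z] =
      ![Y * Z - Z * Y + X * Y + Y * X - Y * Y, Z * X - X * Z + X * X - Y * X - X * Y,
        X * Y - Y * X] := by
  ext i
  fin_cases i <;> simp [factorMatrix, Matrix.mulVec, dotProduct, Fin.sum_univ_three] <;>
    noncomm_ring

theorem vecMul_factorMatrix :
    Matrix.vecMul ![X, Y, Z] (factorMatrix X Y Z) =
      ![Y * Z - Z * Y + X * Y + Y * X - Y * Y, Z * X - X * Z + X * X - Y * X - X * Y,
        X * Y - Y * X] := by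
  ext j
  fin_cases j <;> simp [factorMatrix, Matrix.vecMul, dotProduct, Fin.sum_univ_three] <;>
    noncomm_ring

end Matrix

section Minors

variable {R : Type*} [CommRing R]

theorem map_det_submatrix_factorMatrix {S : Type*} [CommRing S] (f : R →+* S) (X Y Z : R)
    (r s : Fin 2 → Fin 3) :
    f ((factorMatrix X Y Z).submatrix r s).det =
      ((factorMatrix (f X) (f Y) (f Z)).submatrix r s).det := by
  rw [RingHom.map_det, RingHom.mapMatrix_apply, ← Matrix.submatrix_map, map_factorMatrix]

theorem eq_zero_of_det_submatrix_factorMatrix_eq_zero [IsReduced R] {a b c : R}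
    (h : ∀ i j : Fin 3, ((factorMatrix a b c).submatrix i.succAbove j.succAbove).det = 0) :
    a = 0 ∧ b = 0 ∧ c = 0 := by
  have h₀ : a * a = 0 := by simpa [factorMatrix, Matrix.det_fin_two] using h 0 0
  have h₁ : b * b = 0 := by simpa [factorMatrix, Matrix.det_fin_two, Fin.succAbove] using h 1 1
  have h₂ : -(b * a) - (a - b - c) * (a - b + c) = 0 := by
    simpa [factorMatrix, Matrix.det_fin_two, Fin.succAbove, Fin.lt_def] using h 2 2
  have ha : a = 0 := IsReduced.eq_zero a ⟨2, by rw [sq, h₀]⟩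
  have hb : b = 0 := IsReduced.eq_zero b ⟨2, by rw [sq, h₁]⟩
  subst ha hb
  exact ⟨rfl, rfl, IsReduced.eq_zero c ⟨2, by linear_combination h₂⟩⟩

end Minors
end SuperpotentialT1

open SuperpotentialT1 in
theorem stmt_18_general (k : Type*) [Field k]
    (V : Type*) [AddCommGroup V] [Module k V] (B : Module.Basis (Fin 3) k V)
    (φ : (V ⊗[k] (V ⊗[k] V)) →ₗ[k] (V ⊗[k] (V ⊗[k] V)))
    (hφ : ∀ a b c : V, φ (a ⊗ₜ[k] (b ⊗ₜ[k] c)) = c ⊗ₜ[k] (a ⊗ₜ[k] b)) :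
    let x := B 0; let y := B 1; let z := B 2
    let t : V → V → V → V ⊗[k] (V ⊗[k] V) := fun u v w => u ⊗ₜ[k] (v ⊗ₜ[k] w)
    let w₀ := t x y z + t y z x + t z x y - (t x z y + t z y x + t y x z)
      + (t x x y + t x y x + t y x x) - (t y y x + t y x y + t x y y)
    -- the partial derivatives of w₀, as elements of V ⊗ V
    let d₁ : V ⊗[k] V := y ⊗ₜ[k] z - z ⊗ₜ[k] y + x ⊗ₜ[k] y + y ⊗ₜ[k] x - y ⊗ₜ[k] y
    let d₂ : V ⊗[k] V := z ⊗ₜ[k] x - x ⊗ₜ[k] z + x ⊗ₜ[k] x - y ⊗ₜ[k] x - x ⊗ₜ[k] y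
    let d₃ : V ⊗[k] V := x ⊗ₜ[k] y - y ⊗ₜ[k] x
    -- the generators X, Y, Z of the free algebra k⟨x,y,z⟩
    let X : FreeAlgebra k (Fin 3) := FreeAlgebra.ι k 0
    let Y : FreeAlgebra k (Fin 3) := FreeAlgebra.ι k 1
    let Z : FreeAlgebra k (Fin 3) := FreeAlgebra.ι k 2
    -- the partial derivatives of w₀, as elements of the free algebra
    let D₁ := Y * Z - Z * Y + X * Y + Y * X - Y * Y
    let D₂ := Z * X - X * Z + X * X - Y * X - X * Y
    let D₃ := X * Y - Y * X
    -- the matrix M with rows (y, x−y−z, y), (x−y+z, −x, −x), (−y, x, 0)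
    let M : Matrix (Fin 3) (Fin 3) (FreeAlgebra k (Fin 3)) :=
      !![Y, X - Y - Z, Y; X - Y + Z, -X, -X; -Y, X, 0]
    -- the same matrix with entries regarded as commutative polynomials in x, y, z
    let Xc : Fin 3 → MvPolynomial (Fin 3) k := MvPolynomial.X
    let Mc : Matrix (Fin 3) (Fin 3) (MvPolynomial (Fin 3) k) :=
      !![Xc 1, Xc 0 - Xc 1 - Xc 2, Xc 1; Xc 0 - Xc 1 + Xc 2, -Xc 0, -Xc 0; -Xc 1, Xc 0, 0]
    -- (i) w₀ is a superpotential
    (φ w₀ = w₀) ∧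
    -- (ii) the partial derivatives are d₁, d₂, d₃, and they are linearly independent
    (w₀ = x ⊗ₜ[k] d₁ + y ⊗ₜ[k] d₂ + z ⊗ₜ[k] d₃) ∧
    LinearIndependent k ![d₁, d₂, d₃] ∧
    -- (iii) M·(x,y,z)ᵗ = (∂ₓw₀, ∂ᵧw₀, ∂_zw₀) = (x,y,z)·M in the free algebra
    (M.mulVec ![X, Y, Z] = ![D₁, D₂, D₃]) ∧
    (Matrix.vecMul ![X, Y, Z] M = ![D₁, D₂, D₃]) ∧
    -- (iv) the nine 2×2 minors of M have no common zero other than (0,0,0)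
    (∀ a b c : k,
      (∀ i j : Fin 3,
        MvPolynomial.eval ![a, b, c] ((Mc.submatrix i.succAbove j.succAbove).det) = 0) →
      a = 0 ∧ b = 0 ∧ c = 0) := by
  intro x y z t w₀ d₁ d₂ d₃ X Y Z D₁ D₂ D₃ M Xc Mc
  refine ⟨?_, ?_, linearIndependent_partials B, factorMatrix_mulVec X Y Z,
    vecMul_factorMatrix X Y Z, ?_⟩
  · show φ (cyclicTensor x y z - cyclicTensor x z y + cyclicTensor x x y - cyclicTensor y y x) = _
    simp only [map_add, map_sub, map_cyclicTensor φ hφ]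
    rfl
  · simp only [w₀, t, d₁, d₂, d₃, tmul_add, tmul_sub]
    abel
  · intro a b c h
    have hMc : Mc = factorMatrix (Xc 0) (Xc 1) (Xc 2) := rfl
    refine eq_zero_of_det_submatrix_factorMatrix_eq_zero fun i j => ?_
    rw [← h i j, hMc, map_det_submatrix_factorMatrix]
    simp [Xc]

/-- (Type T₁ superpotential, ATV criterion data) For
`w₀ = xyz + yzx + zxy − (xzy + zyx + yxz) + (xxy + xyx + yxx) − (yyx + yxy + xyy)`:
(i) `w₀` is a superpotential; (ii) its partial derivatives are as stated and are
linearly independent; (iii) for the matrix `M`, both `M·(x,y,z)ᵗ` and `(x,y,z)·M`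
(computed in the free algebra) equal the triple of partial derivatives; (iv) the nine
`2×2` minors of `M` (as commutative polynomials) have no common zero besides the origin. -/
theorem stmt_18 (k : Type*) [Field k] [IsAlgClosed k] [CharZero k]
    (V : Type*) [AddCommGroup V] [Module k V] (B : Module.Basis (Fin 3) k V)
    (φ : (V ⊗[k] (V ⊗[k] V)) →ₗ[k] (V ⊗[k] (V ⊗[k] V)))
    (hφ : ∀ a b c : V, φ (a ⊗ₜ[k] (b ⊗ₜ[k] c)) = c ⊗ₜ[k] (a ⊗ₜ[k] b)) :
    let x := B 0; let y := B 1; let z := B 2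
    let t : V → V → V → V ⊗[k] (V ⊗[k] V) := fun u v w => u ⊗ₜ[k] (v ⊗ₜ[k] w)
    let w₀ := t x y z + t y z x + t z x y - (t x z y + t z y x + t y x z)
      + (t x x y + t x y x + t y x x) - (t y y x + t y x y + t x y y)
    -- the partial derivatives of w₀, as elements of V ⊗ V
    let d₁ : V ⊗[k] V := y ⊗ₜ[k] z - z ⊗ₜ[k] y + x ⊗ₜ[k] y + y ⊗ₜ[k] x - y ⊗ₜ[k] y
    let d₂ : V ⊗[k] V := z ⊗ₜ[k] x - x ⊗ₜ[k] z + x ⊗ₜ[k] x - y ⊗ₜ[k] x - x ⊗ₜ[k] y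
    let d₃ : V ⊗[k] V := x ⊗ₜ[k] y - y ⊗ₜ[k] x
    -- the generators X, Y, Z of the free algebra k⟨x,y,z⟩
    let X : FreeAlgebra k (Fin 3) := FreeAlgebra.ι k 0
    let Y : FreeAlgebra k (Fin 3) := FreeAlgebra.ι k 1
    let Z : FreeAlgebra k (Fin 3) := FreeAlgebra.ι k 2
    -- the partial derivatives of w₀, as elements of the free algebra
    let D₁ := Y * Z - Z * Y + X * Y + Y * X - Y * Y
    let D₂ := Z * X - X * Z + X * X - Y * X - X * Y
    let D₃ := X * Y - Y * X
    -- the matrix M with rows (y, x−y−z, y), (x−y+z, −x, −x), (−y, x, 0)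
    let M : Matrix (Fin 3) (Fin 3) (FreeAlgebra k (Fin 3)) :=
      !![Y, X - Y - Z, Y; X - Y + Z, -X, -X; -Y, X, 0]
    -- the same matrix with entries regarded as commutative polynomials in x, y, z
    let Xc : Fin 3 → MvPolynomial (Fin 3) k := MvPolynomial.X
    let Mc : Matrix (Fin 3) (Fin 3) (MvPolynomial (Fin 3) k) :=
      !![Xc 1, Xc 0 - Xc 1 - Xc 2, Xc 1; Xc 0 - Xc 1 + Xc 2, -Xc 0, -Xc 0; -Xc 1, Xc 0, 0]
    -- (i) w₀ is a superpotential
    (φ w₀ = w₀) ∧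
    -- (ii) the partial derivatives are d₁, d₂, d₃, and they are linearly independent
    (w₀ = x ⊗ₜ[k] d₁ + y ⊗ₜ[k] d₂ + z ⊗ₜ[k] d₃) ∧
    LinearIndependent k ![d₁, d₂, d₃] ∧
    -- (iii) M·(x,y,z)ᵗ = (∂ₓw₀, ∂ᵧw₀, ∂_zw₀) = (x,y,z)·M in the free algebra
    (M.mulVec ![X, Y, Z] = ![D₁, D₂, D₃]) ∧
    (Matrix.vecMul ![X, Y, Z] M = ![D₁, D₂, D₃]) ∧
    -- (iv) the nine 2×2 minors of M have no common zero other than (0,0,0)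
    (∀ a b c : k,
      (∀ i j : Fin 3,
        MvPolynomial.eval ![a, b, c] ((Mc.submatrix i.succAbove j.succAbove).det) = 0) →
      a = 0 ∧ b = 0 ∧ c = 0) :=
  stmt_18_general k V B φ hφ
end

section
/- (Type S₁ as an MS twist of a superpotential) Let α, β, γ ∈ k be nonzero, and let a, b ∈ k satisfy a³ = β/γ and b³ = γ/α. Set c := (ab)⁻¹, δ := α·a·b², ε := a²b/β, let θ be the linear automorphism of V with θ(x) = a·x, θ(y) = b·y, θ(z) = c·z, and let w₀ = xyz + yzx + zxy − δ·(xzy + zyx + yxz) ∈ V⊗V⊗V. Then: (i) δ³ = αβγ; (ii) φ(w₀) = w₀ and (θ⊗θ⊗θ)(w₀) = w₀, so θ ∈ Aut(w₀); and (iii) the MS twist satisfies (θ²⊗θ⊗id)(w₀) = ε·(β·xyz + γ·yzx + α·zxy − αβ·xzy − αγ·zyx − βγ·yxz), with ε ≠ 0. -/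
/-!
`w₀` is the difference of the two cyclic sums `xyz + yzx + zxy` and `δ(xzy + zyx + yxz)`, which `φ`
fixes, and the diagonal automorphism `θ = diag(a, b, (ab)⁻¹)` scales both by `a·b·(ab)⁻¹ = 1`.
Under the twist `θ²⊗θ⊗id` the monomial `uvw` is scaled by `λ_u² λ_v`, where `λ` is the eigenvalue
of `θ`. Writing `β = a³γ` and `γ = b³α` makes `β, γ` polynomial in `α, a, b`, and then `δ³ = αβγ`
and the six coefficient identities of the twist are identities of rational functions.
-/

open TensorProduct

namespace TensorProduct

variable {R M : Type*} [CommSemiring R] [AddCommMonoid M] [Module R M]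

def cyclicSum (u v w : M) : M ⊗[R] (M ⊗[R] M) :=
  u ⊗ₜ (v ⊗ₜ w) + v ⊗ₜ (w ⊗ₜ u) + w ⊗ₜ (u ⊗ₜ v)

theorem apply_cyclicSum_eq_self {φ : M ⊗[R] (M ⊗[R] M) →ₗ[R] M ⊗[R] (M ⊗[R] M)}
    (hφ : ∀ u v w : M, φ (u ⊗ₜ (v ⊗ₜ w)) = w ⊗ₜ (u ⊗ₜ v)) (u v w : M) :
    φ (cyclicSum u v w) = cyclicSum u v w := by
  simp only [cyclicSum, map_add, hφ]
  abel

theorem map_map_tmul_tmul_of_eq_smul {f g h : M →ₗ[R] M} {u v w : M} {p q r : R}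
    (hf : f u = p • u) (hg : g v = q • v) (hh : h w = r • w) :
    map f (map g h) (u ⊗ₜ (v ⊗ₜ w)) = (p * q * r) • (u ⊗ₜ[R] (v ⊗ₜ[R] w)) := by
  simp only [map_tmul, hf, hg, hh, tmul_smul, ← smul_tmul', smul_smul]
  ring_nf

theorem map_map_cyclicSum_of_eq_smul {f : M →ₗ[R] M} {u v w : M} {p q r : R}
    (hu : f u = p • u) (hv : f v = q • v) (hw : f w = r • w) :
    map f (map f f) (cyclicSum u v w) = (p * q * r) • cyclicSum u v w := by
  simp only [cyclicSum, map_add, smul_add, map_map_tmul_tmul_of_eq_smul hu hv hw,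
    map_map_tmul_tmul_of_eq_smul hv hw hu, map_map_tmul_tmul_of_eq_smul hw hu hv]
  congr 2 <;> ring

end TensorProduct

theorem stmt_19_general (k : Type*) [Field k]
    (V : Type*) [AddCommGroup V] [Module k V] (B : Module.Basis (Fin 3) k V)
    (φ : (V ⊗[k] (V ⊗[k] V)) →ₗ[k] (V ⊗[k] (V ⊗[k] V)))
    (hφ : ∀ u v w : V, φ (u ⊗ₜ[k] (v ⊗ₜ[k] w)) = w ⊗ₜ[k] (u ⊗ₜ[k] v))
    (α β γ : k) (hα : α ≠ 0) (hβ : β ≠ 0) (hγ : γ ≠ 0)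
    (a b : k) (ha : a^3 = β / γ) (hb : b^3 = γ / α)
    (θ : V ≃ₗ[k] V) (hθx : θ (B 0) = a • B 0) (hθy : θ (B 1) = b • B 1)
    (hθz : θ (B 2) = (a*b)⁻¹ • B 2) :
    let c := (a*b)⁻¹
    let δ := α * a * b^2
    let ε := a^2 * b / β
    let x := B 0; let y := B 1; let z := B 2
    let t : V → V → V → V ⊗[k] (V ⊗[k] V) := fun u v w => u ⊗ₜ[k] (v ⊗ₜ[k] w)
    let w₀ := t x y z + t y z x + t z x y - δ • (t x z y + t z y x + t y x z)
    -- (i) δ³ = αβγ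
    δ^3 = α * β * γ ∧
    -- (ii) w₀ is a superpotential and (θ⊗θ⊗θ)(w₀) = w₀, so θ ∈ Aut(w₀)
    φ w₀ = w₀ ∧
    TensorProduct.map θ.toLinearMap
      (TensorProduct.map θ.toLinearMap θ.toLinearMap) w₀ = w₀ ∧
    -- (iii) the MS twist (θ²⊗θ⊗id)(w₀) is ε times the Type S₁ potential, with ε ≠ 0
    TensorProduct.map (θ.toLinearMap ∘ₗ θ.toLinearMap)
        (TensorProduct.map θ.toLinearMap (LinearMap.id : V →ₗ[k] V)) w₀
      = ε • (β • t x y z + γ • t y z x + α • t z x y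
          - (α*β) • t x z y - (α*γ) • t z y x - (β*γ) • t y x z) ∧
    ε ≠ 0 := by
  have ha3 : a^3 * γ = β := by rw [ha]; field_simp
  have hb3 : b^3 * α = γ := by rw [hb]; field_simp
  have ha0 : a ≠ 0 := by
    rintro rfl; exact div_ne_zero hβ hγ (by simpa using ha.symm)
  have hb0 : b ≠ 0 := by
    rintro rfl; exact div_ne_zero hγ hα (by simpa using hb.symm)
  subst ha3 hb3
  intro c δ ε x y z t w₀
  have hw₀ : w₀ = cyclicSum x y z - δ • cyclicSum x z y := by
    simp only [w₀, t, cyclicSum]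
  have habc : a * b * c = 1 := mul_inv_cancel₀ (mul_ne_zero ha0 hb0)
  have hacb : a * c * b = 1 := by rw [mul_right_comm, habc]
  refine ⟨by ring, ?_, ?_, ?_, div_ne_zero (by positivity) hβ⟩
  · rw [hw₀, map_sub, map_smul, apply_cyclicSum_eq_self hφ, apply_cyclicSum_eq_self hφ]
  · rw [hw₀, map_sub, map_smul, map_map_cyclicSum_of_eq_smul hθx hθy hθz,
      map_map_cyclicSum_of_eq_smul hθx hθz hθy, habc, hacb, one_smul, one_smul]
  · simp only [w₀, t, x, y, z, map_add, map_sub, map_smul, map_tmul, LinearEquiv.coe_coe,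
      LinearMap.comp_apply, LinearMap.id_apply, hθx, hθy, hθz, tmul_smul, ← smul_tmul', smul_smul]
    match_scalars <;> simp only [ε, δ] <;> field_simp

/-- (Type S₁ as an MS twist of a superpotential) With `a³ = β/γ`, `b³ = γ/α`,
`c = (ab)⁻¹`, `δ = αab²`, `ε = a²b/β`, `θ = diag(a,b,c)`, and
`w₀ = xyz + yzx + zxy − δ(xzy + zyx + yxz)`: (i) `δ³ = αβγ`; (ii) `w₀` is a
superpotential fixed by `θ⊗θ⊗θ`, so `θ ∈ Aut(w₀)`; (iii) the MS twist
`(θ²⊗θ⊗id)(w₀)` equals `ε` times the Type S₁ potential, and `ε ≠ 0`. -/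
theorem stmt_19 (k : Type*) [Field k] [IsAlgClosed k] [CharZero k]
    (V : Type*) [AddCommGroup V] [Module k V] (B : Module.Basis (Fin 3) k V)
    (φ : (V ⊗[k] (V ⊗[k] V)) →ₗ[k] (V ⊗[k] (V ⊗[k] V)))
    (hφ : ∀ u v w : V, φ (u ⊗ₜ[k] (v ⊗ₜ[k] w)) = w ⊗ₜ[k] (u ⊗ₜ[k] v))
    (α β γ : k) (hα : α ≠ 0) (hβ : β ≠ 0) (hγ : γ ≠ 0)
    (a b : k) (ha : a^3 = β / γ) (hb : b^3 = γ / α)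
    (θ : V ≃ₗ[k] V) (hθx : θ (B 0) = a • B 0) (hθy : θ (B 1) = b • B 1)
    (hθz : θ (B 2) = (a*b)⁻¹ • B 2) :
    let c := (a*b)⁻¹
    let δ := α * a * b^2
    let ε := a^2 * b / β
    let x := B 0; let y := B 1; let z := B 2
    let t : V → V → V → V ⊗[k] (V ⊗[k] V) := fun u v w => u ⊗ₜ[k] (v ⊗ₜ[k] w)
    let w₀ := t x y z + t y z x + t z x y - δ • (t x z y + t z y x + t y x z)
    -- (i) δ³ = αβγ
    δ^3 = α * β * γ ∧
    -- (ii) w₀ is a superpotential and (θ⊗θ⊗θ)(w₀) = w₀, so θ ∈ Aut(w₀)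
    φ w₀ = w₀ ∧
    TensorProduct.map θ.toLinearMap
      (TensorProduct.map θ.toLinearMap θ.toLinearMap) w₀ = w₀ ∧
    -- (iii) the MS twist (θ²⊗θ⊗id)(w₀) is ε times the Type S₁ potential, with ε ≠ 0
    TensorProduct.map (θ.toLinearMap ∘ₗ θ.toLinearMap)
        (TensorProduct.map θ.toLinearMap (LinearMap.id : V →ₗ[k] V)) w₀
      = ε • (β • t x y z + γ • t y z x + α • t z x y
          - (α*β) • t x z y - (α*γ) • t z y x - (β*γ) • t y x z) ∧
    ε ≠ 0 :=
  stmt_19_general k V B φ hφ α β γ hα hβ hγ a b ha hb θ hθx hθy hθz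
end
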